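/- arXiv:2006.05871 — 3 statements merged into one kernel-verified Lean document; each statement's English description precedes it below -/
import Mathlib

section
/- Let SA[sp..ep] be the suffix-array interval of all occurrences of a pattern P of length m. A position i ∈ [sp..ep] is the leftmost occurrence of document DA[i] inside DA[sp..ep] if and only if C[i] < sp, where C[i] is the largest position j < i with DA[j] = DA[i] (and C[i] = 0 if no such j exists). -/
def IsPrevOccurrence {α : Type*} (DA : ℕ → α) (i c : ℕ) : Prop :=
  (c = 0 ∧ ∀ j, 1 ≤ j → j < i → DA j ≠ DA i) ∨
  (1 ≤ c ∧ c < i ∧ DA c = DA i ∧ ∀ j, c < j → j < i → DA j ≠ DA i)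

theorem IsPrevOccurrence.forall_ne_iff_lt {α : Type*} {DA : ℕ → α} {i c sp : ℕ}
    (h : IsPrevOccurrence DA i c) (hsp : 1 ≤ sp) :
    (∀ j, sp ≤ j → j < i → DA j ≠ DA i) ↔ c < sp := by
  rcases h with ⟨rfl, hnone⟩ | ⟨-, hci, hDA, hgap⟩
  · exact ⟨fun _ => hsp, fun _ j hj hji => hnone j (hsp.trans hj) hji⟩
  · exact ⟨fun hleft => lt_of_not_ge fun hge => hleft c hge hci hDA,
      fun hc j hj hji => hgap j (hc.trans_le hj) hji⟩

/-- key property behind Muthukrishnan's document listing.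
`DA[1..n]` is the document array and `C[1..n]` the previous-occurrence array:
`C i` is the largest `j < i` with `DA j = DA i`, and `C i = 0` if no such `j`
exists.  For the suffix-array interval `[sp..ep]` of all occurrences of a
pattern, a position `i ∈ [sp..ep]` is the leftmost occurrence of document
`DA i` inside `DA[sp..ep]` **iff** `C i < sp`. -/
theorem leftmost_iff_C_lt (n : ℕ) (DA C : ℕ → ℕ) (sp ep : ℕ)
    (hsp : 1 ≤ sp) (hep : ep ≤ n)
    (hC : ∀ i, 1 ≤ i → i ≤ n →
      (C i = 0 ∧ ∀ j, 1 ≤ j → j < i → DA j ≠ DA i) ∨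
      (1 ≤ C i ∧ C i < i ∧ DA (C i) = DA i ∧
        ∀ j, C i < j → j < i → DA j ≠ DA i)) :
    ∀ i, sp ≤ i → i ≤ ep →
      ((∀ j, sp ≤ j → j < i → DA j ≠ DA i) ↔ C i < sp) := by
  intro i hspi hiep
  have hprev : IsPrevOccurrence DA i (C i) := hC i (hsp.trans hspi) (hiep.trans hep)
  exact hprev.forall_ne_iff_lt hsp
end

section
/- If P occurs in the concatenation D at positions forming the suffix-array interval [sp..ep], and for a document T_d the positions ℓ and r are respectively the leftmost and rightmost positions in [sp..ep] with DA[·] = d, then the number of occurrences of P in T_d equals r' − ℓ' + 1, where ℓ' and r' are the positions in the suffix array of T_d of the suffixes of T_d corresponding (by translation of text offsets) to SA[ℓ] and SA[r]. -/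
/-- Length of the longest common prefix of two lists. -/
def lcpLen (a b : List ℕ) : ℕ := ((a.zip b).takeWhile (fun p => p.1 == p.2)).length

/-- The suffix of `s` starting at 1-based position `p`. -/
def suf (s : List ℕ) (p : ℕ) : List ℕ := s.drop (p - 1)

/-- Strict lexicographic order on lists of naturals. -/
def listLt (a b : List ℕ) : Prop := List.Lex (· < ·) a b

/-- 1-based starting position of document `k` in the concatenation `T 1 ⬝ T 2 ⋯ T t`. -/
def docStart (T : ℕ → List ℕ) (k : ℕ) : ℕ :=
  1 + ((List.range (k - 1)).map (fun j => (T (j + 1)).length)).sum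

/-- Concatenation `𝒟 = T 1 ⬝ T 2 ⋯ T t` of the documents. -/
def concatDocs (T : ℕ → List ℕ) (t : ℕ) : List ℕ :=
  ((List.range t).map (fun j => T (j + 1))).flatten

/-!
A suffix of `𝒟` starting inside `T d` is the corresponding suffix of `T d` followed by a fixed
tail. That suffix of `T d` ends with the unique sentinel, which `P` avoids, so `P` prefixes one
iff it prefixes the other; and suffixes of `T d` are pairwise prefix-incomparable, so appending
the tail does not change their lexicographic order. Hence the entries of `[sp..ep]` with
`DA · = d` are sent, monotonically, onto the occurrences of `P` in `T d`. In `SA_d` those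
occurrences form an interval (the lists with prefix `P` are convex in lexicographic order), whose
ends are therefore the ranks `ℓ'` and `r'` of the images of `ℓ` and `r`.
-/

open Set

namespace List

variable {α : Type*}

theorem mem_drop_of_getLast? {s : List α} {z : α} (hz : s.getLast? = some z) {i : ℕ}
    (hi : i < s.length) : z ∈ s.drop i :=
  mem_of_getLast? (by rw [getLast?_drop, if_neg (by omega), hz])

theorem mem_of_suffix_of_getLast? {a s : List α} {z : α} (h : a <:+ s) (ha : a ≠ [])
    (hz : s.getLast? = some z) : z ∈ a := by
  have hlen := h.length_le
  have hpos := length_pos_iff.2 ha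
  rw [suffix_iff_eq_drop.1 h]
  exact mem_drop_of_getLast? hz (by omega)

theorem eq_of_drop_prefix_drop [BEq α] [LawfulBEq α] {s : List α} {z : α}
    (hz : s.getLast? = some z) (hcount : s.count z = 1) {i j : ℕ} (hi : i < s.length)
    (h : s.drop i <+: s.drop j) : i = j := by
  obtain ⟨rest, hrest⟩ := h
  have hlen := congrArg length hrest
  simp only [length_append, length_drop] at hlen
  by_contra hne
  have hrest_ne : rest ≠ [] := by rintro rfl; rw [length_nil] at hlen; omega
  have hzi : z ∈ s.drop i := mem_drop_of_getLast? hz hi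
  have hzrest : z ∈ rest :=
    mem_of_suffix_of_getLast? ((suffix_append _ _).trans (hrest ▸ drop_suffix j s)) hrest_ne hz
  have hle := (drop_suffix j s).count_le z
  rw [← hrest, count_append, hcount] at hle
  have := count_pos_iff.2 hzi
  have := count_pos_iff.2 hzrest
  omega

theorem prefix_append_iff_of_mem {p a b : List α} {z : α} (hz : z ∈ a) (hzp : z ∉ p) :
    p <+: a ++ b ↔ p <+: a :=
  ⟨fun h => (prefix_or_prefix_of_prefix h (prefix_append a b)).resolve_right
      fun h' => hzp (h'.subset hz),
    fun h => h.trans (prefix_append a b)⟩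

section LinearOrder

variable [LinearOrder α]

theorem IsPrefix.of_le_of_le {p a b c : List α} (ha : p <+: a) (hc : p <+: c) (hab : a ≤ b)
    (hbc : b ≤ c) : p <+: b := by
  induction p generalizing a b c with
  | nil => exact nil_prefix
  | cons x p ih =>
    obtain ⟨a', rfl⟩ := ha
    obtain ⟨c', rfl⟩ := hc
    rw [← not_lt] at hab hbc
    cases b with
    | nil => exact absurd (nil_lt_cons _ _) hab
    | cons y b =>
      simp only [cons_append, cons_lt_cons_iff, not_or, not_and] at hab hbc
      obtain rfl : y = x := le_antisymm (not_lt.1 hbc.1) (not_lt.1 hab.1)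
      exact cons_prefix_cons.2 ⟨rfl, ih (prefix_append _ _) (prefix_append _ _)
        (not_lt.1 (hab.2 rfl)) (not_lt.1 (hbc.2 rfl))⟩

theorem append_lt_append_iff_of_not_prefix {a b : List α} (hab : ¬ a <+: b) (hba : ¬ b <+: a)
    (s u : List α) : a ++ s < b ++ u ↔ a < b := by
  induction a generalizing b with
  | nil => exact absurd nil_prefix hab
  | cons x a ih =>
    cases b with
    | nil => exact absurd nil_prefix hba
    | cons y b =>
      by_cases hxy : x = y
      · subst hxy
        simp only [cons_prefix_cons, true_and] at hab hba
        simp [ih hab hba]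
      · simp [cons_lt_cons_iff, hxy]

theorem drop_append_lt_drop_append_iff {s : List α} {z : α} (hz : s.getLast? = some z)
    (hcount : s.count z = 1) {i j : ℕ} (hi : i < s.length) (hj : j < s.length) (b : List α) :
    s.drop i ++ b < s.drop j ++ b ↔ s.drop i < s.drop j := by
  obtain rfl | hij := eq_or_ne i j
  · simp
  exact append_lt_append_iff_of_not_prefix (fun h => hij (eq_of_drop_prefix_drop hz hcount hi h))
    (fun h => hij (eq_of_drop_prefix_drop hz hcount hj h).symm) b b

end LinearOrder

end List

section SuffixArray

variable {α : Type*} [LinearOrder α]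

theorem filter_prefix_eq_Icc {g : ℕ → List α} {L a b : ℕ} {P : List α}
    (hg : StrictMonoOn g (Icc 1 L)) (ha : a ∈ Icc 1 L) (hb : b ∈ Icc 1 L) (hPa : P <+: g a)
    (hPb : P <+: g b) (hbound : ∀ m ∈ Icc 1 L, P <+: g m → g a ≤ g m ∧ g m ≤ g b) :
    (Finset.Icc 1 L).filter (fun m => P <+: g m) = Finset.Icc a b := by
  ext m
  rw [Finset.mem_filter, Finset.mem_Icc, Finset.mem_Icc, ← Set.mem_Icc]
  constructor
  · rintro ⟨hm, hPm⟩
    obtain ⟨ham, hmb⟩ := hbound m hm hPm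
    exact ⟨(hg.le_iff_le ha hm).1 ham, (hg.le_iff_le hm hb).1 hmb⟩
  · rintro ⟨ham, hmb⟩
    have hm : m ∈ Icc 1 L := ⟨ha.1.trans ham, hmb.trans hb.2⟩
    exact ⟨hm, hPa.of_le_of_le hPb ((hg.le_iff_le ha hm).2 ham) ((hg.le_iff_le hm hb).2 hmb)⟩

/-- The occurrences of `P` among `f 1, …, f L` fill one interval of the suffix array `SAd`; its
ends are the ranks of `φ l` and `φ r`. -/
theorem card_filter_prefix_eq {f : ℕ → List α} {L : ℕ} {SAd ISAd φ : ℕ → ℕ} {S : Set ℕ}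
    {P : List α} {l r : ℕ} (hSAd : BijOn SAd (Icc 1 L) (Icc 1 L))
    (hsort : StrictMonoOn (f ∘ SAd) (Icc 1 L))
    (hISAd : ∀ p ∈ Icc 1 L, ISAd p ∈ Icc 1 L ∧ SAd (ISAd p) = p)
    (hmaps : MapsTo φ S {p ∈ Icc 1 L | P <+: f p})
    (hsurj : SurjOn φ S {p ∈ Icc 1 L | P <+: f p}) (hmono : MonotoneOn (f ∘ φ) S)
    (hl : IsLeast S l) (hr : IsGreatest S r) :
    ((Finset.Icc 1 L).filter (fun p => P <+: f p)).card = ISAd (φ r) - ISAd (φ l) + 1 := by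
  obtain ⟨hφl, hPl⟩ := hmaps hl.1
  obtain ⟨hφr, hPr⟩ := hmaps hr.1
  obtain ⟨hal, hSal⟩ := hISAd _ hφl
  obtain ⟨har, hSar⟩ := hISAd _ hφr
  have hranks : (Finset.Icc 1 L).filter (fun m => P <+: f (SAd m))
      = Finset.Icc (ISAd (φ l)) (ISAd (φ r)) := by
    refine filter_prefix_eq_Icc hsort hal har (by rwa [hSal]) (by rwa [hSar]) fun m hm hPm => ?_
    obtain ⟨i, hi, hφi⟩ := hsurj ⟨hSAd.mapsTo hm, hPm⟩
    simp only [hSal, hSar, ← hφi]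
    exact ⟨hmono hl.1 hi (hl.2 hi), hmono hi hr.1 (hr.2 hi)⟩
  have hlr : ISAd (φ l) ≤ ISAd (φ r) := (hsort.le_iff_le hal har).1 <| by
    simpa only [Function.comp_apply, hSal, hSar] using hmono hl.1 hr.1 (hl.2 hr.1)
  calc ((Finset.Icc 1 L).filter (fun p => P <+: f p)).card
      = ((Finset.Icc 1 L).filter (fun m => P <+: f (SAd m))).card := by
        rw [← Finset.coe_Icc] at hSAd
        refine (Finset.card_nbij SAd ?_ ?_ ?_).symm <;> simp only [Finset.coe_filter]
        · exact fun m hm => ⟨hSAd.mapsTo hm.1, hm.2⟩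
        · exact hSAd.injOn.mono fun m hm => hm.1
        · rintro p ⟨hp, hPp⟩
          obtain ⟨m, hm, rfl⟩ := hSAd.surjOn hp
          exact ⟨m, ⟨hm, hPp⟩, rfl⟩
    _ = ISAd (φ r) - ISAd (φ l) + 1 := by rw [hranks, Nat.card_Icc]; omega

end SuffixArray

section Documents

variable {T : ℕ → List ℕ} {t d : ℕ}

theorem docStart_eq_length_concatDocs (T : ℕ → List ℕ) (d : ℕ) :
    docStart T d = (concatDocs T (d - 1)).length + 1 := by
  simp only [docStart, concatDocs, List.length_flatten, List.map_map, Function.comp_def]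
  omega

theorem concatDocs_add (T : ℕ → List ℕ) (a b : ℕ) :
    concatDocs T (a + b)
      = concatDocs T a ++ ((List.range b).map fun j => T (a + j + 1)).flatten := by
  simp only [concatDocs, List.range_add, List.map_append, List.flatten_append, List.map_map,
    Function.comp_def]

theorem exists_concatDocs_eq (hd : 1 ≤ d) (hdt : d ≤ t) :
    ∃ B, concatDocs T t = concatDocs T (d - 1) ++ T d ++ B := by
  obtain ⟨k, rfl⟩ := Nat.exists_eq_add_of_le hdt
  refine ⟨((List.range k).map fun j => T (d + j + 1)).flatten, ?_⟩
  rw [show d + k = d - 1 + (k + 1) by omega, concatDocs_add, List.range_succ_eq_map,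
    List.map_cons, List.flatten_cons, List.map_map, List.append_assoc,
    show d - 1 + 0 + 1 = d by omega]
  congr 3
  refine List.map_congr_left fun j _ => ?_
  simp only [Function.comp_apply]
  congr 1
  omega

theorem suf_concatDocs_eq_append (hd : 1 ≤ d) (hdt : d ≤ t) :
    ∃ B, ∀ g ∈ Ico (docStart T d) (docStart T d + (T d).length),
      suf (concatDocs T t) g = suf (T d) (g - docStart T d + 1) ++ B := by
  obtain ⟨B, hB⟩ := exists_concatDocs_eq (T := T) hd hdt
  refine ⟨B, fun g ⟨hg1, hg2⟩ => ?_⟩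
  rw [docStart_eq_length_concatDocs] at hg1 hg2 ⊢
  set A := concatDocs T (d - 1)
  rw [hB, suf, suf, List.append_assoc, show g - 1 = A.length + (g - (A.length + 1)) by omega,
    List.drop_length_add_append, List.drop_append_of_le_length (by omega), Nat.add_sub_cancel]

theorem docStart_add_length_le {e : ℕ} (hd : 1 ≤ d) (hde : d < e) :
    docStart T d + (T d).length ≤ docStart T e := by
  obtain ⟨B, hB⟩ := exists_concatDocs_eq (T := T) (t := e - 1) hd (by omega)
  rw [docStart_eq_length_concatDocs T d, docStart_eq_length_concatDocs T e, hB]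
  simp only [List.length_append]
  omega

theorem docStart_add_length_le_length_concatDocs (hd : 1 ≤ d) (hdt : d ≤ t) :
    docStart T d + (T d).length ≤ (concatDocs T t).length + 1 := by
  simpa [docStart_eq_length_concatDocs T (t + 1)] using
    docStart_add_length_le (T := T) hd (Nat.lt_succ_of_le hdt)

theorem eq_of_mem_Ico_docStart {e g : ℕ} (hd : 1 ≤ d) (he : 1 ≤ e)
    (hgd : g ∈ Ico (docStart T d) (docStart T d + (T d).length))
    (hge : g ∈ Ico (docStart T e) (docStart T e + (T e).length)) : d = e := by
  rw [mem_Ico] at hgd hge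
  rcases lt_trichotomy d e with hde | rfl | hed
  · have := docStart_add_length_le (T := T) hd hde
    omega
  · rfl
  · have := docStart_add_length_le (T := T) he hed
    omega

variable {z : ℕ} {g g' : ℕ}

theorem prefix_suf_concatDocs_iff {P : List ℕ} (hd : 1 ≤ d) (hdt : d ≤ t)
    (hz : (T d).getLast? = some z) (hzP : z ∉ P)
    (hg : g ∈ Ico (docStart T d) (docStart T d + (T d).length)) :
    P <+: suf (concatDocs T t) g ↔ P <+: suf (T d) (g - docStart T d + 1) := by
  obtain ⟨B, hB⟩ := suf_concatDocs_eq_append (T := T) hd hdt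
  rw [mem_Ico] at hg
  rw [hB g hg]
  exact List.prefix_append_iff_of_mem (List.mem_drop_of_getLast? hz (by omega)) hzP

theorem suf_concatDocs_lt_iff (hd : 1 ≤ d) (hdt : d ≤ t) (hz : (T d).getLast? = some z)
    (hcount : (T d).count z = 1) (hg : g ∈ Ico (docStart T d) (docStart T d + (T d).length))
    (hg' : g' ∈ Ico (docStart T d) (docStart T d + (T d).length)) :
    suf (concatDocs T t) g < suf (concatDocs T t) g'
      ↔ suf (T d) (g - docStart T d + 1) < suf (T d) (g' - docStart T d + 1) := by
  obtain ⟨B, hB⟩ := suf_concatDocs_eq_append (T := T) hd hdt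
  rw [hB g hg, hB g' hg']
  rw [mem_Ico] at hg hg'
  exact List.drop_append_lt_drop_append_iff hz hcount (by omega) (by omega) B

end Documents

/-- correctness of Sadakane's term-frequency scheme.
Setting: sentinel-terminated documents with concatenation `𝒟` of length `n`,
suffix array `SA`, document array `DA`, per-document suffix arrays `SAd` with
inverses `ISAd`.  Let `[sp..ep]` be the suffix-array interval of all
occurrences of a pattern `P` (containing no sentinel) in `𝒟`, and let `l` and
`r` be respectively the leftmost and rightmost positions in `[sp..ep]` with
`DA · = d`.  With `l' = ISAd d` applied to the document-local offset of
`SA l`, and `r'` likewise for `SA r`, the number of occurrences of `P` in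
`T d` equals `r' − l' + 1`. -/
theorem term_frequency_eq (t n : ℕ) (T : ℕ → List ℕ) (sent : ℕ → ℕ)
    (SA DA : ℕ → ℕ) (SAd ISAd : ℕ → ℕ → ℕ) (P : List ℕ)
    (sp ep d l r : ℕ)
    (hn : n = (concatDocs T t).length)
    (hsent : ∀ k, 1 ≤ k → k ≤ t → T k ≠ [] ∧ (T k).getLast? = some (sent k) ∧
      (T k).count (sent k) = 1 ∧ (∀ x ∈ T k, x ≠ sent k → sent k < x) ∧
      (∀ k', 1 ≤ k' → k' ≤ t → k' ≠ k → sent k ∉ T k'))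
    (hbij : Set.BijOn SA (Set.Icc 1 n) (Set.Icc 1 n))
    (hsort : ∀ i j, i ∈ Set.Icc 1 n → j ∈ Set.Icc 1 n → i < j →
      listLt (suf (concatDocs T t) (SA i)) (suf (concatDocs T t) (SA j)))
    (hDA : ∀ i ∈ Set.Icc 1 n, 1 ≤ DA i ∧ DA i ≤ t ∧
      docStart T (DA i) ≤ SA i ∧ SA i < docStart T (DA i) + (T (DA i)).length)
    (hSAd : ∀ k, 1 ≤ k → k ≤ t →
      Set.BijOn (SAd k) (Set.Icc 1 (T k).length) (Set.Icc 1 (T k).length))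
    (hsortd : ∀ k, 1 ≤ k → k ≤ t → ∀ i j, i ∈ Set.Icc 1 (T k).length →
      j ∈ Set.Icc 1 (T k).length → i < j →
      listLt (suf (T k) (SAd k i)) (suf (T k) (SAd k j)))
    (hISAd : ∀ k, 1 ≤ k → k ≤ t → ∀ p ∈ Set.Icc 1 (T k).length,
      ISAd k p ∈ Set.Icc 1 (T k).length ∧ SAd k (ISAd k p) = p)
    (hP : ∀ k, 1 ≤ k → k ≤ t → sent k ∉ P)
    (hsp : 1 ≤ sp) (hep : ep ≤ n)
    (hint : ∀ i ∈ Set.Icc 1 n,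
      ((sp ≤ i ∧ i ≤ ep) ↔ P <+: suf (concatDocs T t) (SA i)))
    (hd : 1 ≤ d ∧ d ≤ t)
    (hl : sp ≤ l ∧ l ≤ ep ∧ DA l = d ∧
      ∀ j, sp ≤ j → j ≤ ep → DA j = d → l ≤ j)
    (hr : sp ≤ r ∧ r ≤ ep ∧ DA r = d ∧
      ∀ j, sp ≤ j → j ≤ ep → DA j = d → j ≤ r) :
    ((Finset.Icc 1 (T d).length).filter (fun p => P <+: suf (T d) p)).card
      = ISAd d (SA r - docStart T d + 1) - ISAd d (SA l - docStart T d + 1) + 1 := by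
  obtain ⟨hd1, hdt⟩ := hd
  obtain ⟨-, hz, hcount, -⟩ := hsent d hd1 hdt
  have hPd := hP d hd1 hdt
  set st := docStart T d
  have hst : 1 ≤ st := Nat.le_add_right _ _
  set S := {i | sp ≤ i ∧ i ≤ ep ∧ DA i = d}
  have hS : ∀ i ∈ S, i ∈ Icc 1 n ∧ SA i ∈ Ico st (st + (T d).length) := by
    rintro i ⟨hi1, hi2, rfl⟩
    have hi : i ∈ Icc 1 n := ⟨hsp.trans hi1, hi2.trans hep⟩
    exact ⟨hi, (hDA i hi).2.2⟩
  refine card_filter_prefix_eq (S := S) (φ := fun i => SA i - st + 1) (hSAd d hd1 hdt)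
    (fun i hi j hj => hsortd d hd1 hdt i j hi hj) (hISAd d hd1 hdt) ?_ ?_ ?_
    ⟨⟨hl.1, hl.2.1, hl.2.2.1⟩, fun j hj => hl.2.2.2 j hj.1 hj.2.1 hj.2.2⟩
    ⟨⟨hr.1, hr.2.1, hr.2.2.1⟩, fun j hj => hr.2.2.2 j hj.1 hj.2.1 hj.2.2⟩
  · intro i hi
    obtain ⟨hin, hSA⟩ := hS i hi
    beta_reduce
    refine ⟨?_, (prefix_suf_concatDocs_iff hd1 hdt hz hPd hSA).1 ((hint i hin).1 ⟨hi.1, hi.2.1⟩)⟩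
    rw [mem_Ico] at hSA
    exact ⟨by omega, by omega⟩
  · rintro p ⟨⟨hp1, hpL⟩, hPp⟩
    have hg : st + p - 1 ∈ Ico st (st + (T d).length) := ⟨by omega, by omega⟩
    have hgn := docStart_add_length_le_length_concatDocs (T := T) hd1 hdt
    obtain ⟨i, hi, hSAi⟩ := hbij.surjOn (show st + p - 1 ∈ Icc 1 n from ⟨by omega, by omega⟩)
    have hPi : P <+: suf (concatDocs T t) (SA i) := by
      rw [hSAi, prefix_suf_concatDocs_iff hd1 hdt hz hPd hg]
      rwa [show st + p - 1 - st + 1 = p by omega]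
    obtain ⟨hsp', hep'⟩ := (hint i hi).2 hPi
    have hDAi := hDA i hi
    exact ⟨i, ⟨hsp', hep', eq_of_mem_Ico_docStart hDAi.1 hd1 hDAi.2.2 (hSAi ▸ hg)⟩,
      show SA i - st + 1 = p by omega⟩
  · intro i hi j hj hij
    obtain rfl | hlt := hij.eq_or_lt
    · rfl
    refine ((suf_concatDocs_lt_iff hd1 hdt hz hcount (hS i hi).2 (hS j hj).2).1 ?_).le
    exact hsort i j (hS i hi).1 (hS j hj).1 hlt
end

section
/- In the suffix array SA of a string S whose suffixes are pairwise distinct, the set of suffix-array positions of suffixes having a fixed string P as a prefix forms a contiguous interval. -/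
/-! Lists with prefix `P` form a convex set for the lexicographic order, and the suffix array
enumerates the suffixes in increasing order, so the ranks of suffixes starting with `P` are
convex in `{1, …, n}`: they run from the least to the greatest such rank. -/

theorem List.IsPrefix.of_lex_between {α : Type*} [Preorder α] {P a b c : List α}
    (hab : List.Lex (· < ·) a b) (hbc : List.Lex (· < ·) b c) (ha : P <+: a) (hc : P <+: c) :
    P <+: b := by
  induction P generalizing a b c with
  | nil => exact List.nil_prefix
  | cons x Q ih =>
    obtain ⟨a', rfl⟩ := ha
    obtain ⟨c', rfl⟩ := hc
    cases hab with
    | cons hab' =>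
      cases hbc with
      | cons hbc' =>
        exact List.cons_prefix_cons.mpr
          ⟨rfl, ih hab' hbc' (Q.prefix_append a') (Q.prefix_append c')⟩
      | rel hxx => exact absurd hxx (lt_irrefl x)
    | rel hxy =>
      cases hbc with
      | cons => exact absurd hxy (lt_irrefl x)
      | rel hyx => exact absurd (hxy.trans hyx) (lt_irrefl x)

theorem Finset.exists_bounds_iff_of_between (s : Finset ℕ) (Q : ℕ → Prop)
    (hQ : ∀ i ∈ s, ∀ j ∈ s, ∀ k ∈ s, i < j → j < k → Q i → Q k → Q j) :
    ∃ sp ep, ∀ i ∈ s, Q i ↔ sp ≤ i ∧ i ≤ ep := by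
  classical
  set A := s.filter Q
  obtain hA | hA := A.eq_empty_or_nonempty
  · refine ⟨1, 0, fun i hi => ⟨fun hi' => ?_, fun _ => by omega⟩⟩
    have hiA : i ∈ A := Finset.mem_filter.mpr ⟨hi, hi'⟩
    simp [hA] at hiA
  · obtain ⟨hs_min, hQ_min⟩ := Finset.mem_filter.mp (A.min'_mem hA)
    obtain ⟨hs_max, hQ_max⟩ := Finset.mem_filter.mp (A.max'_mem hA)
    refine ⟨A.min' hA, A.max' hA, fun i hi => ⟨fun hi' => ?_, fun ⟨hlo, hhi⟩ => ?_⟩⟩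
    · have hiA : i ∈ A := Finset.mem_filter.mpr ⟨hi, hi'⟩
      exact ⟨A.min'_le i hiA, A.le_max' i hiA⟩
    · rcases hlo.eq_or_lt with rfl | hlo
      · exact hQ_min
      rcases hhi.eq_or_lt with rfl | hhi
      · exact hQ_max
      exact hQ _ hs_min i hi _ hs_max hlo hhi hQ_min hQ_max

theorem pattern_positions_form_interval_general (n : ℕ) (S P : List ℕ) (SA : ℕ → ℕ)
    (hsort : ∀ i j, i ∈ Set.Icc 1 n → j ∈ Set.Icc 1 n → i < j →
      listLt (suf S (SA i)) (suf S (SA j))) :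
    ∃ sp ep, ∀ i ∈ Set.Icc 1 n,
      (P <+: suf S (SA i) ↔ sp ≤ i ∧ i ≤ ep) := by
  have hsort' : ∀ i ∈ Finset.Icc 1 n, ∀ j ∈ Finset.Icc 1 n, i < j →
      listLt (suf S (SA i)) (suf S (SA j)) := fun i hi j hj =>
    hsort i j (Finset.mem_Icc.mp hi) (Finset.mem_Icc.mp hj)
  obtain ⟨sp, ep, h⟩ := (Finset.Icc 1 n).exists_bounds_iff_of_between
    (fun i => P <+: suf S (SA i)) fun i hi j hj k hk hij hjk hPi hPk =>
      hPi.of_lex_between (hsort' i hi j hj hij) (hsort' j hj k hk hjk) hPk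
  exact ⟨sp, ep, fun i hi => h i (Finset.mem_Icc.mpr hi)⟩

/-- Let `S` be a string of length `n` whose suffixes are
pairwise distinct, and let `SA` be its suffix array (a bijection of
`{1,…,n}` sorting the suffixes lexicographically).  Then the set of
suffix-array positions of suffixes having a fixed pattern `P` as a prefix
forms a contiguous interval `[sp..ep]` (possibly empty). -/
theorem pattern_positions_form_interval (n : ℕ) (S P : List ℕ) (SA : ℕ → ℕ)
    (hn : n = S.length)
    (hbij : Set.BijOn SA (Set.Icc 1 n) (Set.Icc 1 n))
    (hdist : ∀ p q, p ∈ Set.Icc 1 n → q ∈ Set.Icc 1 n → p ≠ q →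
      suf S p ≠ suf S q)
    (hsort : ∀ i j, i ∈ Set.Icc 1 n → j ∈ Set.Icc 1 n → i < j →
      listLt (suf S (SA i)) (suf S (SA j))) :
    ∃ sp ep, ∀ i ∈ Set.Icc 1 n,
      (P <+: suf S (SA i) ↔ sp ≤ i ∧ i ≤ ep) :=
  pattern_positions_form_interval_general n S P SA hsort
end
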